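/- Every Boolean function f : (Fin n → Bool) → Bool in the clone generated by {g₁}, where g₁(x,y,z) = x ∧ (y ∨ ¬z), is 1-separating: there exists an index i : Fin n such that for all x, f x = true implies x i = true. -/

import Mathlib

/-- The clone generated by a set `B` of Boolean functions: the smallest family containing all
projections and `B`, and closed under composition. -/
inductive InClone (B : (k : ℕ) → ((Fin k → Bool) → Bool) → Prop) :
    (n : ℕ) → ((Fin n → Bool) → Bool) → Prop
  | proj {n : ℕ} (i : Fin n) : InClone B n (fun x => x i)
  | base {k : ℕ} {g : (Fin k → Bool) → Bool} (hg : B k g) : InClone B k g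
  | comp {k n : ℕ} {g : (Fin k → Bool) → Bool} {h : Fin k → ((Fin n → Bool) → Bool)}
      (hg : InClone B k g) (hh : ∀ i, InClone B n (h i)) :
      InClone B n (fun x => g (fun i => h i x))

/-- g₁(x,y,z) = x ∧ (y ∨ ¬z). -/
def g1 : (Fin 3 → Bool) → Bool := fun x => x 0 && (x 1 || !x 2)

/-- The generating set {g₁}. -/
inductive G1Base : (k : ℕ) → ((Fin k → Bool) → Bool) → Prop
  | g1 : G1Base 3 g1

/-! The 1-separating functions contain the projections and are closed under composition: if `g`
is separated by coordinate `j`, then `g ∘ (h₁, …, h_k)` is separated by the coordinate that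
separates `h_j`. Since `g₁` is separated by its first coordinate, the whole clone `[{g₁}]` is
1-separating. -/

def IsOneSeparating {n : ℕ} (f : (Fin n → Bool) → Bool) : Prop :=
  ∃ i : Fin n, ∀ x : Fin n → Bool, f x = true → x i = true

theorem isOneSeparating_proj {n : ℕ} (i : Fin n) : IsOneSeparating fun x : Fin n → Bool => x i :=
  ⟨i, fun _ hx => hx⟩

theorem IsOneSeparating.comp {k n : ℕ} {g : (Fin k → Bool) → Bool}
    {h : Fin k → (Fin n → Bool) → Bool} (hg : IsOneSeparating g)
    (hh : ∀ j, IsOneSeparating (h j)) : IsOneSeparating fun x => g fun j => h j x := by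
  obtain ⟨j, hj⟩ := hg
  obtain ⟨i, hi⟩ := hh j
  exact ⟨i, fun x hx => hi x (hj _ hx)⟩

theorem InClone.isOneSeparating {B : (k : ℕ) → ((Fin k → Bool) → Bool) → Prop}
    (hB : ∀ k g, B k g → IsOneSeparating g) {n : ℕ} {f : (Fin n → Bool) → Bool}
    (hf : InClone B n f) : IsOneSeparating f := by
  induction hf with
  | proj i => exact isOneSeparating_proj i
  | base hg => exact hB _ _ hg
  | comp _ _ ihg ihh => exact ihg.comp ihh

theorem isOneSeparating_g1 : IsOneSeparating g1 :=
  ⟨0, fun _ hx => (Bool.and_eq_true _ _).mp hx |>.1⟩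

/-- Every function in the clone generated by {g₁} is 1-separating. -/
theorem clone_g1_oneSeparating {n : ℕ} {f : (Fin n → Bool) → Bool}
    (hf : InClone G1Base n f) :
    ∃ i : Fin n, ∀ x : Fin n → Bool, f x = true → x i = true :=
  hf.isOneSeparating fun _ _ hg => by cases hg; exact isOneSeparating_g1
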